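/- Let c : Fin n → Fin n → Fin n → ℝ be the structure constants of an n-dimensional real Lie algebra, let f : Fin n → ℕ → ℝ be such that f i p ≠ 0 for all i and p, and let c₀ : Fin n → Fin n → Fin n → ℝ be such that for all i, j, k the sequence p ↦ c i j k * (f i p) * (f j p) / (f k p) tends to c₀ i j k as p → ∞. Then there exist γ : Fin n → ℝ with γ i ≠ 0 for all i, and β : Fin n → ℤ, such that for all i, j, k the function ε ↦ c i j k * (γ i * γ j / γ k) * ε ^ (β i + β j - β k) (integer power, ε > 0) tends to c₀ i j k as ε → 0⁺. -/

import Mathlib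

/-!
Put `x p m = -log (f m p)`. For a triple with `c i j k ≠ 0`, the linear form `x i + x j - x k`,
which has integer coefficients, tends to `+∞` along `p` if `c₀ i j k = 0` and converges
otherwise. If `G` is a generalized inverse of the matrix `B` of the convergent forms, then
`x p - G B x p` lies in `ker B` and still makes the divergent forms large. As `B` is integral, `G`
can be taken rational, so the open cone cut out in `ker B` by the divergent forms contains
rational points, and clearing denominators gives the integer signature `β`. The limits of the
convergent forms lie in the closed range of `B`; a preimage `y` of them gives
`γ m = f m p₀ * exp (-y m)`, where `p₀` is large enough for the signs to be right.
-/

open Filter Topology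

theorem LinearMap.exists_comp_comp_eq_self {K V W : Type*} [DivisionRing K] [AddCommGroup V]
    [Module K V] [AddCommGroup W] [Module K W] (f : V →ₗ[K] W) :
    ∃ g : W →ₗ[K] V, f ∘ₗ g ∘ₗ f = f := by
  obtain ⟨σ, hσ⟩ := f.rangeRestrict.exists_rightInverse_of_surjective f.range_rangeRestrict
  obtain ⟨π, hπ⟩ := (LinearMap.range f).subtype.exists_leftInverse_of_injective
    (Submodule.ker_subtype _)
  refine ⟨σ ∘ₗ π, LinearMap.ext fun v => ?_⟩
  have h1 := LinearMap.congr_fun hπ (f.rangeRestrict v)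
  have h2 := congrArg Subtype.val (LinearMap.congr_fun hσ (f.rangeRestrict v))
  simp only [LinearMap.comp_apply, LinearMap.id_apply] at h1 h2 ⊢
  exact h1 ▸ h2

theorem Matrix.exists_mul_mul_eq_self {K m n : Type*} [Field K] [Fintype m] [Fintype n]
    [DecidableEq m] [DecidableEq n] (M : Matrix m n K) : ∃ G : Matrix n m K, M * G * M = M := by
  obtain ⟨g, hg⟩ := M.toLin'.exists_comp_comp_eq_self
  refine ⟨LinearMap.toMatrix' g, ?_⟩
  simpa [LinearMap.toMatrix'_comp, Matrix.mul_assoc] using congrArg LinearMap.toMatrix' hg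

theorem exists_pos_int_mul_eq_intCast {ι : Type*} [Finite ι] (q : ι → ℚ) :
    ∃ D : ℤ, 0 < D ∧ ∀ i, ∃ b : ℤ, (b : ℚ) = D * q i := by
  obtain ⟨⟨D, hD⟩, hq⟩ :=
    IsLocalization.exist_integer_multiples_of_finite (nonZeroDivisors ℤ) q
  -- the common denominator `D` may be negative, `D * D` is not
  refine ⟨D * D, mul_self_pos.mpr (nonZeroDivisors.ne_zero hD), fun i => ?_⟩
  obtain ⟨b, hb⟩ := hq i
  refine ⟨D * b, ?_⟩
  simp only [algebraMap_int_eq, eq_intCast, zsmul_eq_mul] at hb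
  push_cast
  rw [hb, mul_assoc]

namespace Matrix

variable {α ι ι₀ ι₁ : Type*} [Fintype ι] [Fintype ι₀]

theorem exists_mulVec_eq_of_tendsto {l : Filter α} [l.NeBot] (B : Matrix ι₁ ι ℝ)
    {x : α → ι → ℝ} {d : ι₁ → ℝ} (hB : Tendsto (fun p => B *ᵥ x p) l (𝓝 d)) :
    ∃ y, B *ᵥ y = d :=
  (LinearMap.range B.mulVecLin).closed_of_finiteDimensional.mem_of_tendsto hB
    (Eventually.of_forall fun p => ⟨x p, rfl⟩)

variable [Fintype ι₁] [DecidableEq ι] [DecidableEq ι₁]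

theorem exists_mulVec_eq_zero_and_pos_of_tendsto {l : Filter α} [l.NeBot]
    (A : Matrix ι₀ ι ℝ) (B : Matrix ι₁ ι ℝ) {x : α → ι → ℝ} {d : ι₁ → ℝ}
    (hA : ∀ s, Tendsto (fun p => (A *ᵥ x p) s) l atTop)
    (hB : Tendsto (fun p => B *ᵥ x p) l (𝓝 d)) :
    ∃ z, B *ᵥ z = 0 ∧ ∀ s, 0 < (A *ᵥ z) s := by
  obtain ⟨G, hG⟩ := B.exists_mul_mul_eq_self
  -- `x p - G B x p` lies in `ker B` and differs from `x p` by a convergent sequence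
  have hker : ∀ v, B *ᵥ (v - G *ᵥ (B *ᵥ v)) = 0 := fun v => by
    rw [mulVec_sub, mulVec_mulVec, mulVec_mulVec, hG, sub_self]
  have hcorr : Tendsto (fun p => (A *ᵥ (G *ᵥ (B *ᵥ x p)))) l (𝓝 (A *ᵥ (G *ᵥ d))) :=
    ((continuous_const.matrix_mulVec continuous_id).comp
      (continuous_const.matrix_mulVec continuous_id)).continuousAt.tendsto.comp hB
  have hpos : ∀ s, Tendsto (fun p => (A *ᵥ (x p - G *ᵥ (B *ᵥ x p))) s) l atTop := fun s => by
    refine ((hA s).atTop_add (tendsto_pi_nhds.mp hcorr s).neg).congr fun p => ?_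
    rw [mulVec_sub, Pi.sub_apply, sub_eq_add_neg]
  obtain ⟨p, hp⟩ := (eventually_all.mpr fun s => (hpos s).eventually_gt_atTop 0).exists
  exact ⟨_, hker (x p), hp⟩

theorem exists_rat_mulVec_eq_zero_and_pos_of_real (A : Matrix ι₀ ι ℚ)
    (B : Matrix ι₁ ι ℚ) {z : ι → ℝ} (hBz : B.map (↑) *ᵥ z = 0) (hAz : ∀ s, 0 < (A.map (↑) *ᵥ z) s) :
    ∃ β : ι → ℚ, B *ᵥ β = 0 ∧ ∀ s, 0 < (A *ᵥ β) s := by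
  set φ := Rat.castHom ℝ
  obtain ⟨G, hG⟩ := B.exists_mul_mul_eq_self
  -- `P` is a rational projection onto `ker B` fixing `z`; it maps rational points near `z`
  -- to rational points of the open cone
  set P : Matrix ι ι ℚ := 1 - G * B
  have hBP : B * P = 0 := by rw [Matrix.mul_sub, Matrix.mul_one, ← Matrix.mul_assoc, hG, sub_self]
  have hPz : P.map φ *ᵥ z = z := by
    rw [Matrix.map_sub _ φ.map_sub, Matrix.map_one _ φ.map_zero φ.map_one, Matrix.map_mul,
      sub_mulVec, one_mulVec, ← mulVec_mulVec, show B.map φ *ᵥ z = 0 from hBz, mulVec_zero,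
      sub_zero]
  set U := {q : ι → ℝ | ∀ s, 0 < (A.map φ *ᵥ (P.map φ *ᵥ q)) s}
  have hU : IsOpen U := by
    simp only [U, Set.ofPred_forall]
    exact isOpen_iInter_of_finite fun s => isOpen_lt continuous_const (by fun_prop)
  obtain ⟨q, hq⟩ := (DenseRange.piMap fun _ => Rat.denseRange_cast).exists_mem_open hU
    ⟨z, fun s => by rw [hPz]; exact hAz s⟩
  refine ⟨P *ᵥ q, by rw [mulVec_mulVec, hBP, zero_mulVec], fun s => ?_⟩
  have hcast : φ ∘ (P *ᵥ q) = P.map φ *ᵥ (φ ∘ q) := funext (φ.map_mulVec P q)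
  have hpos : 0 < φ ((A *ᵥ (P *ᵥ q)) s) := by
    rw [φ.map_mulVec, hcast]
    exact hq s
  exact (Rat.cast_pos (K := ℝ)).mp hpos

theorem exists_int_mulVec_eq_zero_and_pos_of_tendsto {l : Filter α} [l.NeBot]
    (A : Matrix ι₀ ι ℤ) (B : Matrix ι₁ ι ℤ) {x : α → ι → ℝ} {d : ι₁ → ℝ}
    (hA : ∀ s, Tendsto (fun p => (A.map (↑) *ᵥ x p) s) l atTop)
    (hB : Tendsto (fun p => B.map (↑) *ᵥ x p) l (𝓝 d)) :
    ∃ β : ι → ℤ, B *ᵥ β = 0 ∧ ∀ s, 0 < (A *ᵥ β) s := by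
  obtain ⟨z, hBz, hAz⟩ := exists_mulVec_eq_zero_and_pos_of_tendsto _ _ hA hB
  obtain ⟨q, hBq, hAq⟩ :=
    exists_rat_mulVec_eq_zero_and_pos_of_real (A.map (↑)) (B.map (↑)) (z := z)
      (by simpa only [map_map, Function.comp_def, Rat.cast_intCast] using hBz)
      (by simpa only [map_map, Function.comp_def, Rat.cast_intCast] using hAz)
  obtain ⟨D, hD, hDq⟩ := exists_pos_int_mul_eq_intCast q
  choose b hb using hDq
  have hbq : (fun i => (b i : ℚ)) = (D : ℚ) • q := funext hb
  refine ⟨b, funext fun t => ?_, fun s => ?_⟩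
  · have h : (B.map (↑) *ᵥ fun i => (b i : ℚ)) t = 0 := by
      rw [hbq, mulVec_smul, hBq, smul_zero, Pi.zero_apply]
    qify
    simpa [mulVec, dotProduct] using h
  · have h : 0 < (A.map (↑) *ᵥ fun i => (b i : ℚ)) s := by
      rw [hbq, mulVec_smul, Pi.smul_apply, smul_eq_mul]
      exact mul_pos (Int.cast_pos.mpr hD) (hAq s)
    qify
    simpa [mulVec, dotProduct] using h

end Matrix

theorem Real.log_mul_div {a b c : ℝ} (ha : a ≠ 0) (hb : b ≠ 0) (hc : c ≠ 0) :
    log (a * b / c) = log a + log b - log c := by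
  rw [log_div (mul_ne_zero ha hb) hc, log_mul ha hb]

section

open Matrix Real

variable {ι : Type*} [Fintype ι] [DecidableEq ι]

def scalingWeights {κ : Type*} (e : κ → ι × ι × ι) : Matrix κ ι ℤ :=
  of fun s => Pi.single (e s).1 1 + Pi.single (e s).2.1 1 - Pi.single (e s).2.2 1

theorem scalingWeights_map_mulVec {κ R : Type*} [Ring R] (e : κ → ι × ι × ι) (v : ι → R)
    (s : κ) : ((scalingWeights e).map (↑) *ᵥ v) s = v (e s).1 + v (e s).2.1 - v (e s).2.2 := by
  simp only [scalingWeights, mulVec, dotProduct, map_apply, of_apply, Pi.add_apply,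
    Pi.sub_apply, Int.cast_add, Int.cast_sub, add_mul, sub_mul, Finset.sum_add_distrib,
    Finset.sum_sub_distrib, Pi.single_apply, Int.cast_ite, Int.cast_one, Int.cast_zero, ite_mul,
    one_mul, zero_mul, Finset.sum_ite_eq', Finset.mem_univ, if_true]

theorem scalingWeights_mulVec {κ : Type*} (e : κ → ι × ι × ι) (v : ι → ℤ) (s : κ) :
    (scalingWeights e *ᵥ v) s = v (e s).1 + v (e s).2.1 - v (e s).2.2 := by
  convert scalingWeights_map_mulVec e v s
  ext
  simp

theorem exists_int_signature (f : ι → ℕ → ℝ) (hf : ∀ m p, f m p ≠ 0) :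
    ∃ β : ι → ℤ, ∀ i j k,
      (Tendsto (fun p => f i p * f j p / f k p) atTop (𝓝 0) → 0 < β i + β j - β k) ∧
      (∀ L ≠ 0, Tendsto (fun p => f i p * f j p / f k p) atTop (𝓝 L) →
        β i + β j - β k = 0) := by
  classical
  set g : ι × ι × ι → ℕ → ℝ := fun t p => f t.1 p * f t.2.1 p / f t.2.2 p
  have hg : ∀ t p, g t p ≠ 0 := fun t p =>
    div_ne_zero (mul_ne_zero (hf _ p) (hf _ p)) (hf _ p)
  let ι₀ := {t // Tendsto (g t) atTop (𝓝 0)}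
  let ι₁ := {t // ∃ L ≠ 0, Tendsto (g t) atTop (𝓝 L)}
  -- `Real.log` is `log |·|`, so no sign condition on `f` is needed
  set x : ℕ → ι → ℝ := fun p m => -log (f m p)
  have hx : ∀ t p, x p t.1 + x p t.2.1 - x p t.2.2 = -log (g t p) := fun t p => by
    rw [log_mul_div (hf _ p) (hf _ p) (hf _ p)]
    ring
  have hdiverge : ∀ s : ι₀, Tendsto
      (fun p => ((scalingWeights (Subtype.val : ι₀ → _)).map (↑) *ᵥ x p) s) atTop atTop := by
    intro s
    simp only [scalingWeights_map_mulVec, hx]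
    refine tendsto_neg_atBot_atTop.comp (tendsto_log_nhdsNE_zero.comp ?_)
    exact tendsto_nhdsWithin_iff.mpr ⟨s.2, Eventually.of_forall (hg s.1)⟩
  have hconv : Tendsto (fun p => (scalingWeights (Subtype.val : ι₁ → _)).map (↑) *ᵥ x p) atTop
      (𝓝 fun t => -log t.2.choose) := by
    refine tendsto_pi_nhds.mpr fun t => ?_
    obtain ⟨hL, h⟩ := t.2.choose_spec
    simp only [scalingWeights_map_mulVec, hx]
    exact ((continuousAt_log hL).tendsto.comp h).neg
  obtain ⟨β, hB, hA⟩ := exists_int_mulVec_eq_zero_and_pos_of_tendsto _ _ hdiverge hconv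
  refine ⟨β, fun i j k => ⟨fun h => ?_, fun L hL h => ?_⟩⟩
  · simpa only [scalingWeights_mulVec] using hA ⟨(i, j, k), h⟩
  · simpa only [scalingWeights_mulVec, Pi.zero_apply] using
      congrFun hB ⟨(i, j, k), L, hL, h⟩

theorem exists_scale_factors (f : ι → ℕ → ℝ) (hf : ∀ m p, f m p ≠ 0) (L : ι → ι → ι → ℝ) :
    ∃ γ : ι → ℝ, (∀ m, γ m ≠ 0) ∧ ∀ i j k, L i j k ≠ 0 →
      Tendsto (fun p => f i p * f j p / f k p) atTop (𝓝 (L i j k)) →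
        γ i * γ j / γ k = L i j k := by
  classical
  set g : ι × ι × ι → ℕ → ℝ := fun t p => f t.1 p * f t.2.1 p / f t.2.2 p
  have hg : ∀ t p, g t p ≠ 0 := fun t p =>
    div_ne_zero (mul_ne_zero (hf _ p) (hf _ p)) (hf _ p)
  let ι₁ :=
    {t : ι × ι × ι // L t.1 t.2.1 t.2.2 ≠ 0 ∧ Tendsto (g t) atTop (𝓝 (L t.1 t.2.1 t.2.2))}
  -- the signs of `γ` will be those of `f p₀`
  obtain ⟨p₀, hp₀⟩ : ∃ p₀, ∀ t : ι₁, 0 < g t.1 p₀ / L t.1.1 t.1.2.1 t.1.2.2 := by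
    refine (eventually_all.mpr fun t => ?_ : ∀ᶠ p in atTop, ∀ t : ι₁, _).exists
    refine (t.2.2.div_const _).eventually (eventually_gt_nhds ?_)
    rw [div_self t.2.1]
    exact one_pos
  set x : ℕ → ι → ℝ := fun p m => log (f m p₀) - log (f m p)
  have hx : ∀ t p, x p t.1 + x p t.2.1 - x p t.2.2 = log (g t p₀) - log (g t p) :=
    fun t p => by
      rw [log_mul_div (hf _ p) (hf _ p) (hf _ p),
        log_mul_div (hf _ p₀) (hf _ p₀) (hf _ p₀)]
      ring
  obtain ⟨y, hy⟩ :=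
    ((scalingWeights (Subtype.val : ι₁ → _)).map (↑)).exists_mulVec_eq_of_tendsto (l := atTop)
      (x := x) (d := fun t => log (g t.1 p₀) - log (L t.1.1 t.1.2.1 t.1.2.2))
      (tendsto_pi_nhds.mpr fun t => by
        simp only [scalingWeights_map_mulVec, hx]
        exact ((continuousAt_log t.2.1).tendsto.comp t.2.2).const_sub _)
  refine ⟨fun m => f m p₀ / exp (y m), fun m => div_ne_zero (hf m p₀) (exp_ne_zero _),
    fun i j k hL h => ?_⟩
  have hyt := congrFun hy ⟨(i, j, k), hL, h⟩
  rw [scalingWeights_map_mulVec, ← log_div (hg (i, j, k) p₀) hL] at hyt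
  calc f i p₀ / exp (y i) * (f j p₀ / exp (y j)) / (f k p₀ / exp (y k))
      = g (i, j, k) p₀ / exp (y i + y j - y k) := by
        rw [exp_sub, exp_add]
        field_simp
        rfl
    _ = g (i, j, k) p₀ / (g (i, j, k) p₀ / L i j k) := by
        rw [hyt, exp_log (hp₀ ⟨(i, j, k), hL, h⟩)]
    _ = L i j k := div_div_cancel₀ (hg (i, j, k) p₀)

end

theorem diagonal_sequential_contraction_equiv_genIW_integer_general
    (n : ℕ) (c c₀ : Fin n → Fin n → Fin n → ℝ)
    (f : Fin n → ℕ → ℝ)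
    (hfne : ∀ i p, f i p ≠ 0)
    (hlim : ∀ i j k, Tendsto (fun p : ℕ => c i j k * f i p * f j p / f k p)
      atTop (𝓝 (c₀ i j k))) :
    ∃ γ : Fin n → ℝ, (∀ i, γ i ≠ 0) ∧ ∃ β : Fin n → ℤ, ∀ i j k,
      Tendsto (fun ε : ℝ => c i j k * (γ i * γ j / γ k) * ε ^ (β i + β j - β k))
        (𝓝[>] (0 : ℝ)) (𝓝 (c₀ i j k)) := by
  have hratio : ∀ i j k, c i j k ≠ 0 →
      Tendsto (fun p => f i p * f j p / f k p) atTop (𝓝 (c₀ i j k / c i j k)) := fun i j k hc =>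
    ((hlim i j k).div_const (c i j k)).congr fun p => by field_simp
  obtain ⟨β, hβ⟩ := exists_int_signature f hfne
  obtain ⟨γ, hγ0, hγ⟩ := exists_scale_factors f hfne fun i j k => c₀ i j k / c i j k
  refine ⟨γ, hγ0, β, fun i j k => ?_⟩
  by_cases hc : c i j k = 0
  · have hc₀ : c₀ i j k = 0 := tendsto_nhds_unique (hlim i j k) (by simp [hc])
    simp only [hc, hc₀, zero_mul]
    exact tendsto_const_nhds
  by_cases hc₀ : c₀ i j k = 0
  · have hpos := (hβ i j k).1 (by simpa [hc₀] using hratio i j k hc)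
    have hzpow : Tendsto (fun ε : ℝ => ε ^ (β i + β j - β k)) (𝓝[>] 0) (𝓝 0) := by
      simpa [zero_zpow _ hpos.ne'] using
        (continuousAt_zpow₀ (0 : ℝ) _ (Or.inr hpos.le)).tendsto.mono_left nhdsWithin_le_nhds
    simpa [hc₀] using hzpow.const_mul (c i j k * (γ i * γ j / γ k))
  · have hL : c₀ i j k / c i j k ≠ 0 := div_ne_zero hc₀ hc
    simp only [(hβ i j k).2 _ hL (hratio i j k hc), zpow_zero, mul_one,
      hγ i j k hL (hratio i j k hc), mul_div_cancel₀ _ hc]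
    exact tendsto_const_nhds

/-- Any diagonal sequential contraction of a real Lie algebra is equivalent to a
generalized Inönü–Wigner contraction with an integer signature. -/
theorem diagonal_sequential_contraction_equiv_genIW_integer
    (n : ℕ) (c c₀ : Fin n → Fin n → Fin n → ℝ)
    (hanti : ∀ i j k, c i j k = -(c j i k))
    (hjac : ∀ i j k m, ∑ l, (c i j l * c l k m + c k i l * c l j m + c j k l * c l i m) = 0)
    (f : Fin n → ℕ → ℝ)
    (hfne : ∀ i p, f i p ≠ 0)
    (hlim : ∀ i j k, Tendsto (fun p : ℕ => c i j k * f i p * f j p / f k p)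
      atTop (𝓝 (c₀ i j k))) :
    ∃ γ : Fin n → ℝ, (∀ i, γ i ≠ 0) ∧ ∃ β : Fin n → ℤ, ∀ i j k,
      Tendsto (fun ε : ℝ => c i j k * (γ i * γ j / γ k) * ε ^ (β i + β j - β k))
        (𝓝[>] (0 : ℝ)) (𝓝 (c₀ i j k)) :=
  diagonal_sequential_contraction_equiv_genIW_integer_general n c c₀ f hfne hlim
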